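/- arXiv:2404.08473 — 2 statements merged into one kernel-verified Lean document; each statement's English description precedes it below -/
import Mathlib

section
/- Let H be a complex Hilbert space and let T ∈ B(H). The following conditions are equivalent: (i) ker(I − T) reduces T; (ii) T* x = x for every x ∈ ker(I − T); (iii) ‖T* x‖ = ‖x‖ for every x ∈ ker(I − T); (iv) ker(I − T) ⊆ ker(I − T*). -/
open scoped InnerProductSpace

namespace ContinuousLinearMap

theorem mem_ker_one_sub_iff {R M : Type*} [Ring R] [TopologicalSpace M] [AddCommGroup M]
    [Module R M] [IsTopologicalAddGroup M] (T : M →L[R] M) (x : M) :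
    x ∈ LinearMap.ker ((1 - T : M →L[R] M) : M →ₗ[R] M) ↔ T x = x := by
  simp [sub_eq_zero, eq_comm (a := T x)]

variable {𝕜 H : Type*} [RCLike 𝕜] [NormedAddCommGroup H] [InnerProductSpace 𝕜 H]
  [CompleteSpace H] {T : H →L[𝕜] H} {x : H}

/-- For a fixed point `x` of `T`, `⟪T† x, x⟫ = ‖x‖²`, so
`‖T† x - x‖² = ‖T† x‖² - ‖x‖²`. -/
theorem adjoint_apply_eq_self_of_norm_eq (hx : T x = x) (hnorm : ‖adjoint T x‖ = ‖x‖) :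
    adjoint T x = x := by
  have hinner : ⟪adjoint T x, x⟫_𝕜 = ⟪x, x⟫_𝕜 := by rw [adjoint_inner_left, hx]
  have hsq : ‖adjoint T x - x‖ ^ 2 = 0 := by
    rw [@norm_sub_sq 𝕜, hnorm, hinner, inner_self_eq_norm_sq]
    ring
  simpa [sub_eq_zero] using hsq

theorem norm_adjoint_apply_eq_of_apply_eq_self (hx : T x = x)
    (hTx : T (adjoint T x) = adjoint T x) : ‖adjoint T x‖ = ‖x‖ := by
  have hinner : ⟪adjoint T x, adjoint T x⟫_𝕜 = ⟪x, x⟫_𝕜 :=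
    calc ⟪adjoint T x, adjoint T x⟫_𝕜
        = ⟪x, T (adjoint T x)⟫_𝕜 := adjoint_inner_left T _ x
      _ = ⟪T x, x⟫_𝕜 := by rw [hTx, adjoint_inner_right]
      _ = ⟪x, x⟫_𝕜 := by rw [hx]
  have hsq : ‖adjoint T x‖ ^ 2 = ‖x‖ ^ 2 := by
    exact_mod_cast (inner_self_eq_norm_sq_to_K (𝕜 := 𝕜) _).symm.trans
      (hinner.trans (inner_self_eq_norm_sq_to_K x))
  exact (sq_eq_sq₀ (norm_nonneg _) (norm_nonneg _)).mp hsq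

end ContinuousLinearMap

open ContinuousLinearMap in
/-- For `T ∈ B(H)` the following are equivalent: (i) `ker (I - T)` reduces `T`;
(ii) `T* x = x` for every `x ∈ ker (I - T)`; (iii) `‖T* x‖ = ‖x‖` for every
`x ∈ ker (I - T)`; (iv) `ker (I - T) ⊆ ker (I - T*)`. -/
theorem stmt7 {H : Type*} [NormedAddCommGroup H] [InnerProductSpace ℂ H] [CompleteSpace H]
    (T : H →L[ℂ] H) :
    List.TFAE
      [ (∀ x ∈ LinearMap.ker ((1 - T : H →L[ℂ] H) : H →ₗ[ℂ] H), T x ∈ LinearMap.ker ((1 - T : H →L[ℂ] H) : H →ₗ[ℂ] H)) ∧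
          (∀ x ∈ LinearMap.ker ((1 - T : H →L[ℂ] H) : H →ₗ[ℂ] H),
            ContinuousLinearMap.adjoint T x ∈ LinearMap.ker ((1 - T : H →L[ℂ] H) : H →ₗ[ℂ] H)),
        ∀ x ∈ LinearMap.ker ((1 - T : H →L[ℂ] H) : H →ₗ[ℂ] H), ContinuousLinearMap.adjoint T x = x,
        ∀ x ∈ LinearMap.ker ((1 - T : H →L[ℂ] H) : H →ₗ[ℂ] H), ‖ContinuousLinearMap.adjoint T x‖ = ‖x‖,
        LinearMap.ker ((1 - T : H →L[ℂ] H) : H →ₗ[ℂ] H) ≤ LinearMap.ker ((1 - ContinuousLinearMap.adjoint T : H →L[ℂ] H) : H →ₗ[ℂ] H) ] := by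
  simp only [SetLike.le_def, mem_ker_one_sub_iff]
  tfae_have 1 → 2 := fun ⟨_, h⟩ x hx =>
    adjoint_apply_eq_self_of_norm_eq hx (norm_adjoint_apply_eq_of_apply_eq_self hx (h x hx))
  tfae_have 2 → 1 := fun h => ⟨fun x hx => by rw [hx, hx], fun x hx => by rw [h x hx, hx]⟩
  tfae_have 2 → 3 := fun h x hx => by rw [h x hx]
  tfae_have 3 → 2 := fun h x hx => adjoint_apply_eq_self_of_norm_eq hx (h x hx)
  tfae_have 2 ↔ 4 := Iff.rfl
  tfae_finish
end

section
/- Let H be a complex Hilbert space and let T ∈ B(H) be an operator such that ker(I − T) reduces T. Then the power sequence {T^n} is weakly convergent if and only if ⟨T^n x, y⟩ → 0 as n → ∞ for every x in the orthogonal complement ker(I − T)^⊥ and every y ∈ H; and if this is the case, then the weak limit of {T^n} is the orthogonal projection of H onto ker(I − T) and ker(I − T) = ker(I − T*). -/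
/-!
A weak limit `A` of `Tⁿ` satisfies `T A = A` and fixes every fixed vector of `T`, so it is an
idempotent with range `ker (1 - T)`; its adjoint is the weak limit of `T*ⁿ`, so `A*` has range
`ker (1 - T*)`. If `ker (1 - T)` reduces `T`, its orthogonal complement is `T`-invariant, hence
killed by `A`; thus `A` is the orthogonal projection, `A = A*`, and the two kernels coincide.
Conversely, if `Tⁿ → 0` weakly on the complement, the orthogonal projection is the weak limit,
because `Tⁿ` fixes its range.
-/

open Filter Topology

open scoped InnerProductSpace InnerProduct

section

variable {𝕜 E : Type*} [RCLike 𝕜] [NormedAddCommGroup E] [InnerProductSpace 𝕜 E]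

local notation "Fix(" T ")" => LinearMap.ker ((1 - T : E →L[𝕜] E) : E →ₗ[𝕜] E)

namespace ContinuousLinearMap

lemma mem_ker_one_sub_iff_s10 {T : E →L[𝕜] E} {x : E} : x ∈ Fix(T) ↔ T x = x := by
  rw [LinearMap.mem_ker, coe_coe, sub_apply, one_apply_eq_self, sub_eq_zero, eq_comm]

lemma pow_apply_of_apply_eq_self {T : E →L[𝕜] E} {x : E} (hx : T x = x) (n : ℕ) :
    (T ^ n) x = x := by
  rw [FunLike.coe_pow_eq_iterate]
  exact Function.IsFixedPt.iterate hx n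

def IsWeakPowLimit (T A : E →L[𝕜] E) : Prop :=
  ∀ x y : E, Tendsto (fun n : ℕ => ⟪(T ^ n) x, y⟫_𝕜) atTop (𝓝 ⟪A x, y⟫_𝕜)

lemma IsWeakPowLimit.apply_of_apply_eq_self {T A : E →L[𝕜] E} (h : IsWeakPowLimit T A) {x : E}
    (hx : T x = x) : A x = x := by
  refine ext_inner_right 𝕜 fun y => tendsto_nhds_unique (h x y) ?_
  simp only [pow_apply_of_apply_eq_self hx, tendsto_const_nhds]

variable [CompleteSpace E]

lemma pow_apply_mem_orthogonal {T : E →L[𝕜] E} {K : Submodule 𝕜 E}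
    (hK : ∀ x ∈ K, adjoint T x ∈ K) {x : E} (hx : x ∈ Kᗮ) (n : ℕ) : (T ^ n) x ∈ Kᗮ := by
  have hT : Set.MapsTo T Kᗮ Kᗮ :=
    (Module.End.mem_invtSubmodule_iff_mapsTo _).1 (orthogonal_mem_invtSubmodule hK)
  rw [FunLike.coe_pow_eq_iterate]
  exact hT.iterate n hx

lemma inner_adjoint_pow_apply_left (T : E →L[𝕜] E) (n : ℕ) (x y : E) :
    ⟪(adjoint T ^ n) x, y⟫_𝕜 = ⟪x, (T ^ n) y⟫_𝕜 := by
  rw [← star_eq_adjoint, ← star_pow, star_eq_adjoint, adjoint_inner_left]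

namespace IsWeakPowLimit

variable {T A : E →L[𝕜] E}

lemma apply_apply (h : IsWeakPowLimit T A) (x : E) : T (A x) = A x := by
  refine ext_inner_right 𝕜 fun y => ?_
  have hshift := (h x y).comp (tendsto_add_atTop_nat 1)
  simp only [Function.comp_def, pow_succ', mul_apply_eq_comp, ← adjoint_inner_right T] at hshift
  rw [← adjoint_inner_right]
  exact tendsto_nhds_unique (h x _) hshift

lemma comp_self (h : IsWeakPowLimit T A) : A ∘L A = A :=
  ext fun x => h.apply_of_apply_eq_self (h.apply_apply x)

lemma range_eq (h : IsWeakPowLimit T A) : LinearMap.range (A : E →ₗ[𝕜] E) = Fix(T) := by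
  apply le_antisymm
  · rintro _ ⟨x, rfl⟩
    exact mem_ker_one_sub_iff_s10.2 (h.apply_apply x)
  · exact fun x hx => ⟨x, h.apply_of_apply_eq_self (mem_ker_one_sub_iff_s10.1 hx)⟩

lemma apply_eq_zero_of_mem_orthogonal (hT : ∀ x ∈ Fix(T), adjoint T x ∈ Fix(T))
    (h : IsWeakPowLimit T A) {x : E} (hx : x ∈ (Fix(T))ᗮ) : A x = 0 := by
  have hAx : A x ∈ (Fix(T))ᗮ := fun u hu => by
    rw [inner_eq_zero_symm]
    refine tendsto_nhds_unique (h x u) ?_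
    simp only [fun n => inner_eq_zero_symm.1 (pow_apply_mem_orthogonal hT hx n u hu),
      tendsto_const_nhds]
  exact Submodule.disjoint_def.1 (Submodule.orthogonal_disjoint _) _
    (mem_ker_one_sub_iff_s10.2 (h.apply_apply x)) hAx

protected lemma adjoint (h : IsWeakPowLimit T A) : IsWeakPowLimit (adjoint T) (adjoint A) := by
  intro x y
  simpa only [inner_adjoint_pow_apply_left, adjoint_inner_left, RCLike.star_def, inner_conj_symm]
    using (h y x).star

lemma eq_starProjection (hT : ∀ x ∈ Fix(T), adjoint T x ∈ Fix(T)) (h : IsWeakPowLimit T A) :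
    A = (Fix(T)).starProjection := by
  ext x
  have hPx := (Fix(T)).starProjection_apply_mem x
  calc A x = A ((Fix(T)).starProjection x) + A (x - (Fix(T)).starProjection x) := by
        rw [← map_add, add_sub_cancel]
    _ = (Fix(T)).starProjection x := by
        rw [h.apply_of_apply_eq_self (mem_ker_one_sub_iff_s10.1 hPx),
          h.apply_eq_zero_of_mem_orthogonal hT (Submodule.sub_starProjection_mem_orthogonal x),
          add_zero]

end IsWeakPowLimit

lemma isWeakPowLimit_starProjection {T : E →L[𝕜] E}
    (h : ∀ x ∈ (Fix(T))ᗮ, ∀ y : E, Tendsto (fun n : ℕ => ⟪(T ^ n) x, y⟫_𝕜) atTop (𝓝 0)) :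
    IsWeakPowLimit T (Fix(T)).starProjection := by
  intro x y
  set P := (Fix(T)).starProjection
  have hPx : T (P x) = P x := mem_ker_one_sub_iff_s10.1 (Submodule.starProjection_apply_mem _ x)
  have hsplit (n : ℕ) : (T ^ n) x = P x + (T ^ n) (x - P x) := by
    rw [map_sub, pow_apply_of_apply_eq_self hPx, add_sub_cancel]
  simpa only [hsplit, inner_add_left, add_zero] using
    tendsto_const_nhds.add (h _ (Submodule.sub_starProjection_mem_orthogonal x) y)

end ContinuousLinearMap

end

/-- If `ker (I - T)` reduces `T`, then `{T^n}` is weakly convergent iff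
`⟨T^n x, y⟩ → 0` for all `x ∈ ker (I - T)ᗮ` and `y ∈ H`; and in that case the weak
limit is the orthogonal projection of `H` onto `ker (I - T)` and
`ker (I - T) = ker (I - T*)`. -/
theorem stmt10 {H : Type*} [NormedAddCommGroup H] [InnerProductSpace ℂ H] [CompleteSpace H]
    (T : H →L[ℂ] H)
    (hred : (∀ x ∈ LinearMap.ker ((1 - T : H →L[ℂ] H) : H →ₗ[ℂ] H), T x ∈ LinearMap.ker ((1 - T : H →L[ℂ] H) : H →ₗ[ℂ] H)) ∧
      (∀ x ∈ LinearMap.ker ((1 - T : H →L[ℂ] H) : H →ₗ[ℂ] H),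
        ContinuousLinearMap.adjoint T x ∈ LinearMap.ker ((1 - T : H →L[ℂ] H) : H →ₗ[ℂ] H))) :
    ((∃ A : H →L[ℂ] H, ∀ x y : H,
        Tendsto (fun n : ℕ => (inner ℂ ((T ^ n) x) y : ℂ)) atTop (𝓝 (inner ℂ (A x) y)))
      ↔ (∀ x ∈ (LinearMap.ker ((1 - T : H →L[ℂ] H) : H →ₗ[ℂ] H))ᗮ, ∀ y : H,
          Tendsto (fun n : ℕ => (inner ℂ ((T ^ n) x) y : ℂ)) atTop (𝓝 (0 : ℂ)))) ∧
    (∀ P : H →L[ℂ] H,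
      (∀ x y : H,
        Tendsto (fun n : ℕ => (inner ℂ ((T ^ n) x) y : ℂ)) atTop (𝓝 (inner ℂ (P x) y))) →
      (P ∘L P = P ∧ ContinuousLinearMap.adjoint P = P ∧
        LinearMap.range (P : H →ₗ[ℂ] H) = LinearMap.ker ((1 - T : H →L[ℂ] H) : H →ₗ[ℂ] H) ∧
        LinearMap.ker ((1 - T : H →L[ℂ] H) : H →ₗ[ℂ] H) = LinearMap.ker ((1 - ContinuousLinearMap.adjoint T : H →L[ℂ] H) : H →ₗ[ℂ] H))) := by
  open ContinuousLinearMap in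
  refine ⟨⟨fun ⟨A, hA⟩ x hx y => ?_, fun h => ⟨_, isWeakPowLimit_starProjection h⟩⟩, fun P hP => ?_⟩
  · simpa only [IsWeakPowLimit.apply_eq_zero_of_mem_orthogonal hred.2 hA hx, inner_zero_left]
      using hA x y
  · have hP : IsWeakPowLimit T P := hP
    have hPP : adjoint P = P :=
      hP.eq_starProjection hred.2 ▸ (isSelfAdjoint_starProjection _).adjoint_eq
    refine ⟨hP.comp_self, hPP, hP.range_eq, ?_⟩
    rw [← hP.range_eq, ← hP.adjoint.range_eq, hPP]
end
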